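/- arXiv:1603.07405 — 2 statements merged into one kernel-verified Lean document; each statement's English description precedes it below -/
import Mathlib

section
/- Let 𝒟 be a 2-(v,k,λ) design with λ ≥ 1 and 2 ≤ k < v, and let G be a group acting on the point set of 𝒟 by automorphisms (i.e., the action permutes the set of blocks). If G acts transitively on the set of blocks of 𝒟, then G acts transitively on the set of points of 𝒟. -/
open Pointwise

/-- Block-transitivity implies point-transitivity for a 2-(v,k,λ) design. -/
theorem blockTransitive_implies_pointTransitive
    {P : Type*} [Fintype P] [DecidableEq P] (v k lam : ℕ)
    (hv : Fintype.card P = v)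
    (𝓑 : Finset (Finset P))
    (hsize : ∀ B ∈ 𝓑, B.card = k)
    (hlam : ∀ α β : P, α ≠ β →
      (𝓑.filter fun B => α ∈ B ∧ β ∈ B).card = lam)
    (hlam1 : 1 ≤ lam) (hk2 : 2 ≤ k) (hkv : k < v)
    {G : Type*} [Group G] [MulAction G P]
    (hact : ∀ (g : G), ∀ B ∈ 𝓑, g • B ∈ 𝓑)
    (hbtrans : ∀ B ∈ 𝓑, ∀ B' ∈ 𝓑, ∃ g : G, g • B = B') :
    ∀ α β : P, ∃ g : G, g • α = β := by
  classical
  intro α β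
  by_contra hno
  push_neg at hno
  have hv3 : 3 ≤ v := by omega
  -- basic counting tool
  have hcard : ∀ (B Q : Finset P), (B ∩ Q).card = ∑ q ∈ Q, if q ∈ B then 1 else 0 := by
    intro B Q
    rw [← Finset.card_filter]
    congr 1
    ext q
    simp [Finset.mem_inter, and_comm]
  have key : ∀ (F : Finset (Finset P)) (Q : Finset P),
      ∑ B ∈ F, (B ∩ Q).card = ∑ q ∈ Q, (F.filter (fun B => q ∈ B)).card := by
    intro F Q
    simp_rw [hcard, Finset.card_filter]
    exact Finset.sum_comm
  have key2 : ∀ (Q1 Q2 : Finset P),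
      ∑ B ∈ 𝓑, (B ∩ Q1).card * (B ∩ Q2).card
        = ∑ p ∈ Q1, ∑ q ∈ Q2, (𝓑.filter (fun B => p ∈ B ∧ q ∈ B)).card := by
    intro Q1 Q2
    have h : ∀ B : Finset P, (B ∩ Q1).card * (B ∩ Q2).card
        = ∑ p ∈ Q1, ∑ q ∈ Q2, if p ∈ B ∧ q ∈ B then 1 else 0 := by
      intro B
      rw [hcard B Q1, hcard B Q2, Finset.sum_mul_sum]
      refine Finset.sum_congr rfl fun p _ => Finset.sum_congr rfl fun q _ => ?_
      by_cases hp : p ∈ B <;> by_cases hq : q ∈ B <;> simp [hp, hq]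
    simp_rw [h, Finset.card_filter]
    rw [Finset.sum_comm]
    exact Finset.sum_congr rfl fun p _ => Finset.sum_comm
  -- replication number is constant
  have hr : ∀ p : P, (𝓑.filter (fun B => p ∈ B)).card * (k - 1) = (v - 1) * lam := by
    intro p
    have hL : ∑ B ∈ 𝓑.filter (fun B => p ∈ B), (B ∩ Finset.univ.erase p).card
        = (𝓑.filter (fun B => p ∈ B)).card * (k - 1) := by
      rw [Finset.sum_congr rfl (fun B hB => ?_), Finset.sum_const, smul_eq_mul]
      simp only [Finset.mem_filter] at hB
      have : B ∩ Finset.univ.erase p = B.erase p := by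
        ext x; simp [Finset.mem_erase, and_comm]
      rw [this, Finset.card_erase_of_mem hB.2, hsize B hB.1]
    have hR : ∑ q ∈ Finset.univ.erase p,
        ((𝓑.filter (fun B => p ∈ B)).filter (fun B => q ∈ B)).card = (v - 1) * lam := by
      rw [Finset.sum_congr rfl (fun q hq => ?_), Finset.sum_const, smul_eq_mul,
        Finset.card_erase_of_mem (Finset.mem_univ p), Finset.card_univ, hv]
      rw [Finset.filter_filter]
      exact hlam p q (Ne.symm (Finset.ne_of_mem_erase hq))
    rw [← hL, key, hR]
  -- the two orbits
  set O : Finset P := Finset.univ.filter (fun p => ∃ g : G, g • α = p) with hO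
  set O' : Finset P := Finset.univ.filter (fun p => ∃ g : G, g • β = p) with hO'
  have memO : ∀ p : P, p ∈ O ↔ ∃ g : G, g • α = p := by intro p; simp [hO]
  have memO' : ∀ p : P, p ∈ O' ↔ ∃ g : G, g • β = p := by intro p; simp [hO']
  have hinv : ∀ (Q : Finset P), (∀ p ∈ Q, ∀ g : G, g • p ∈ Q) → ∀ g : G, g • Q = Q := by
    intro Q hQ g
    apply Finset.eq_of_subset_of_card_le
    · intro x hx
      rw [Finset.mem_smul_finset] at hx
      obtain ⟨y, hy, rfl⟩ := hx
      exact hQ y hy g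
    · rw [Finset.card_smul_finset]
  have hOinv : ∀ g : G, g • O = O := by
    refine hinv O (fun p hp g => ?_)
    obtain ⟨h, rfl⟩ := (memO p).mp hp
    exact (memO _).mpr ⟨g * h, (mul_smul g h α)⟩
  have hO'inv : ∀ g : G, g • O' = O' := by
    refine hinv O' (fun p hp g => ?_)
    obtain ⟨h, rfl⟩ := (memO' p).mp hp
    exact (memO' _).mpr ⟨g * h, (mul_smul g h β)⟩
  -- intersection numbers with invariant sets are constant over blocks
  have hconst : ∀ (Q : Finset P), (∀ g : G, g • Q = Q) →
      ∀ B ∈ 𝓑, ∀ B' ∈ 𝓑, (B ∩ Q).card = (B' ∩ Q).card := by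
    intro Q hQ B hB B' hB'
    obtain ⟨g, rfl⟩ := hbtrans B hB B' hB'
    have : g • B ∩ Q = g • (B ∩ Q) := by
      rw [Finset.smul_finset_inter, hQ g]
    rw [this, Finset.card_smul_finset]
  -- every point is on a block
  have hrpos : ∀ p : P, 0 < (𝓑.filter (fun B => p ∈ B)).card := by
    intro p
    have hp := hr p
    rcases Nat.eq_zero_or_pos ((𝓑.filter (fun B => p ∈ B)).card) with h | h
    · rw [h, zero_mul] at hp
      have : 0 < (v - 1) * lam := Nat.mul_pos (by omega) (by omega)
      omega
    · exact h
  obtain ⟨B₁, hB₁⟩ := Finset.card_pos.mp (hrpos α)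
  obtain ⟨B₂, hB₂⟩ := Finset.card_pos.mp (hrpos β)
  simp only [Finset.mem_filter] at hB₁ hB₂
  -- notation
  set b := 𝓑.card with hb
  set r := (𝓑.filter (fun B => α ∈ B)).card with hrdef
  have hrall : ∀ p : P, (𝓑.filter (fun B => p ∈ B)).card = r := by
    intro p
    have h1 := hr p
    have h2 := hr α
    have : 0 < k - 1 := by omega
    exact Nat.eq_of_mul_eq_mul_right this (by rw [h1, h2])
  set s := (B₁ ∩ O).card with hs
  set s' := (B₂ ∩ O').card with hs'
  set m := O.card with hm
  set m' := O'.card with hm'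
  have hαO : α ∈ O := (memO α).mpr ⟨1, one_smul G α⟩
  have hβO' : β ∈ O' := (memO' β).mpr ⟨1, one_smul G β⟩
  have hspos : 0 < s := Finset.card_pos.mpr ⟨α, Finset.mem_inter.mpr ⟨hB₁.2, hαO⟩⟩
  have hs'pos : 0 < s' := Finset.card_pos.mpr ⟨β, Finset.mem_inter.mpr ⟨hB₂.2, hβO'⟩⟩
  have hbpos : 0 < b := Finset.card_pos.mpr ⟨B₁, hB₁.1⟩
  have hrpos' : 0 < r := hrpos α
  -- orbits are disjoint
  have hdisj : ∀ p ∈ O, ∀ q ∈ O', p ≠ q := by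
    intro p hp q hq hpq
    obtain ⟨g, rfl⟩ := (memO p).mp hp
    obtain ⟨h, hh⟩ := (memO' q).mp hq
    exact hno (h⁻¹ * g) (by rw [mul_smul, hpq, ← hh, inv_smul_smul])
  -- equation 1 : m * r = b * s
  have h1 : m * r = b * s := by
    have := key 𝓑 O
    rw [Finset.sum_congr rfl (fun q hq => hrall q), Finset.sum_const, smul_eq_mul] at this
    rw [Finset.sum_congr rfl (fun B hB => hconst O hOinv B hB B₁ hB₁.1),
      Finset.sum_const, smul_eq_mul] at this
    rw [← this]
  -- equation 2 : m' * r = b * s'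
  have h2 : m' * r = b * s' := by
    have := key 𝓑 O'
    rw [Finset.sum_congr rfl (fun q hq => hrall q), Finset.sum_const, smul_eq_mul] at this
    rw [Finset.sum_congr rfl (fun B hB => hconst O' hO'inv B hB B₂ hB₂.1),
      Finset.sum_const, smul_eq_mul] at this
    rw [← this]
  -- equation 3 : lam * (m * m') = b * (s * s')
  have h3 : lam * (m * m') = b * (s * s') := by
    have hA : ∑ B ∈ 𝓑, (B ∩ O).card * (B ∩ O').card = b * (s * s') := by
      rw [Finset.sum_congr rfl (fun B hB => ?_), Finset.sum_const, smul_eq_mul]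
      rw [hconst O hOinv B hB B₁ hB₁.1, hconst O' hO'inv B hB B₂ hB₂.1]
    have hC : ∑ p ∈ O, ∑ q ∈ O', (𝓑.filter (fun B => p ∈ B ∧ q ∈ B)).card
        = m * (m' * lam) := by
      rw [Finset.sum_congr rfl (fun p hp => ?_), Finset.sum_const, smul_eq_mul]
      rw [Finset.sum_congr rfl (fun q hq => hlam p q (hdisj p hp q hq)),
        Finset.sum_const, smul_eq_mul]
    have hk2' := key2 O O'
    rw [hA, hC] at hk2'
    rw [hk2']; ring
  -- equation 4 : b * k = v * r
  have h4 : b * k = v * r := by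
    have := key 𝓑 Finset.univ
    rw [Finset.sum_congr rfl (fun q hq => hrall q), Finset.sum_const, smul_eq_mul,
      Finset.card_univ, hv] at this
    rw [Finset.sum_congr rfl (fun B hB => ?_), Finset.sum_const, smul_eq_mul] at this
    · rw [← this]
    · rw [Finset.inter_univ]; exact hsize B hB
  have h5 : r * (k - 1) = (v - 1) * lam := hr α
  -- derive r * r = lam * b
  have h6 : (b * (s * s')) * (r * r) = (b * (s * s')) * (lam * b) := by
    calc (b * (s * s')) * (r * r) = lam * (m * m') * (r * r) := by rw [← h3]
      _ = lam * ((m * r) * (m' * r)) := by ring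
      _ = lam * ((b * s) * (b * s')) := by rw [h1, h2]
      _ = (b * (s * s')) * (lam * b) := by ring
  have h7 : r * r = lam * b := Nat.eq_of_mul_eq_mul_left (Nat.mul_pos hbpos (Nat.mul_pos hspos hs'pos)) h6
  -- derive r * k = lam * v
  have h8 : r * k = lam * v := by
    refine Nat.eq_of_mul_eq_mul_right hrpos' ?_
    calc (r * k) * r = (r * r) * k := by ring
      _ = lam * b * k := by rw [h7]
      _ = lam * (b * k) := by ring
      _ = lam * (v * r) := by rw [h4]
      _ = (lam * v) * r := by ring
  -- derive r = lam
  have e1 : r * k = r * (k - 1) + r := by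
    have : k - 1 + 1 = k := by omega
    rw [← this, Nat.mul_succ, this]
  have e2 : lam * v = lam * (v - 1) + lam := by
    have : v - 1 + 1 = v := by omega
    rw [← this, Nat.mul_succ, this]
  have h9 : r = lam := by
    have h8' : r * (k - 1) + r = lam * (v - 1) + lam := by rw [← e1, ← e2]; exact h8
    have h5' : r * (k - 1) = lam * (v - 1) := by rw [h5]; ring
    omega
  -- contradiction
  have : lam * (k - 1) = lam * (v - 1) := by
    rw [← h9, h5, h9]; ring
  have := Nat.eq_of_mul_eq_mul_left (by omega : 0 < lam) this
  omega
end

section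
/- (Fisher's inequality) Let 𝒟 be a 2-(v,k,λ) design with b blocks, λ ≥ 1 and 2 ≤ k < v. Then v ≤ b. -/
/-- Fisher's inequality: in a 2-(v,k,λ) design with λ ≥ 1 and 2 ≤ k < v,
we have `v ≤ b`. -/
theorem fisher_inequality
    {P : Type*} [Fintype P] [DecidableEq P] (v k lam : ℕ)
    (hv : Fintype.card P = v)
    (𝓑 : Finset (Finset P))
    (hsize : ∀ B ∈ 𝓑, B.card = k)
    (hlam : ∀ α β : P, α ≠ β →
      (𝓑.filter fun B => α ∈ B ∧ β ∈ B).card = lam)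
    (hlam1 : 1 ≤ lam) (hk2 : 2 ≤ k) (hkv : k < v) :
    v ≤ 𝓑.card := by
  have hv1 : 1 ≤ v := by omega
  -- replication: every point α is in r_α blocks, where r_α*(k-1) = lam*(v-1)
  have hrepl : ∀ α : P, (𝓑.filter fun B => α ∈ B).card * (k - 1) = lam * (v - 1) := by
    intro α
    have key : ∑ β ∈ Finset.univ.erase α, (𝓑.filter fun B => α ∈ B ∧ β ∈ B).card
        = lam * (v - 1) := by
      rw [Finset.sum_congr rfl (fun β hβ => hlam α β (Finset.ne_of_mem_erase hβ).symm)]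
      simp [Finset.card_erase_of_mem, hv, Nat.mul_comm]
    have swap : ∑ β ∈ Finset.univ.erase α, (𝓑.filter fun B => α ∈ B ∧ β ∈ B).card
        = ∑ B ∈ 𝓑, (if α ∈ B then k - 1 else 0) := by
      have h1 : ∀ β : P, ((𝓑.filter fun B => α ∈ B ∧ β ∈ B).card : ℕ)
          = ∑ B ∈ 𝓑, (if α ∈ B ∧ β ∈ B then 1 else 0) := by
        intro β; rw [Finset.sum_boole]; norm_num
      rw [Finset.sum_congr rfl fun β _ => h1 β, Finset.sum_comm]
      refine Finset.sum_congr rfl fun B hB => ?_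
      by_cases hα : α ∈ B
      · simp only [hα, true_and, if_true]
        rw [Finset.sum_boole]
        have h2 : (Finset.univ.erase α).filter (fun β => β ∈ B) = B.erase α := by
          ext y; simp [and_comm]
        rw [h2, Finset.card_erase_of_mem hα, hsize B hB]
        norm_num
      · simp [hα]
    rw [swap, ← Finset.sum_filter, Finset.sum_const, smul_eq_mul] at key
    exact key
  -- r is the same for all points
  have hPne : Nonempty P := by rw [← Fintype.card_pos_iff]; omega
  obtain ⟨α₀⟩ := hPne
  set r : ℕ := (𝓑.filter fun B => α₀ ∈ B).card with hr_def
  have hr : ∀ α : P, (𝓑.filter fun B => α ∈ B).card = r := by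
    intro α
    have hk1 : 0 < k - 1 := by omega
    exact Nat.eq_of_mul_eq_mul_right hk1 ((hrepl α).trans (hrepl α₀).symm)
  have hrlam : lam < r := by
    by_contra hc
    push_neg at hc
    have h := hrepl α₀
    rw [← hr_def] at h
    have h1 : r * (k - 1) ≤ lam * (k - 1) :=
      Nat.mul_le_mul hc (le_refl _)
    have h2 : lam * (k - 1) + lam ≤ lam * (v - 1) := by
      calc lam * (k - 1) + lam = lam * (k - 1 + 1) := by ring
        _ ≤ lam * (v - 1) := Nat.mul_le_mul (le_refl lam) (by omega)
    linarith
  classical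
  -- incidence vectors of points
  set x : P → (↥𝓑 → ℚ) := fun α B => if α ∈ B.1 then 1 else 0 with hx_def
  have gram : ∀ α β : P, (∑ B : ↥𝓑, x α B * x β B)
      = ((𝓑.filter fun B => α ∈ B ∧ β ∈ B).card : ℚ) := by
    intro α β
    calc ∑ B : ↥𝓑, x α B * x β B
        = ∑ B : ↥𝓑, (if α ∈ B.1 ∧ β ∈ B.1 then (1 : ℚ) else 0) := by
          refine Finset.sum_congr rfl fun B _ => ?_
          by_cases hα : α ∈ B.1 <;> by_cases hβ : β ∈ B.1 <;>
            simp [hx_def, hα, hβ]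
      _ = ∑ B ∈ 𝓑, (if α ∈ B ∧ β ∈ B then (1 : ℚ) else 0) := by
          rw [Finset.univ_eq_attach]
          exact Finset.sum_attach 𝓑 (fun B => if α ∈ B ∧ β ∈ B then (1 : ℚ) else 0)
      _ = ((𝓑.filter fun B => α ∈ B ∧ β ∈ B).card : ℚ) := Finset.sum_boole _ _
  have gram' : ∀ α β : P, (∑ B : ↥𝓑, x α B * x β B)
      = if α = β then (r : ℚ) else (lam : ℚ) := by
    intro α β
    by_cases h : α = β
    · subst h
      rw [if_pos rfl, gram]
      norm_cast
      simp only [and_self]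
      exact hr α
    · rw [if_neg h, gram]
      norm_cast
      exact hlam α β h
  -- the incidence vectors are linearly independent
  have hli : LinearIndependent ℚ x := by
    rw [Fintype.linearIndependent_iff]
    intro g hg
    set S : ℚ := ∑ α : P, g α with hS_def
    have eq1 : ∀ β : P, (lam : ℚ) * S + g β * ((r : ℚ) - lam) = 0 := by
      intro β
      have h0 : (∑ B : ↥𝓑, (∑ α : P, g α * x α B) * x β B) = 0 := by
        have hz : ∀ B : ↥𝓑, (∑ α : P, g α * x α B) = 0 := by
          intro B
          have := congrFun hg B
          simpa [Finset.sum_apply, Pi.smul_apply, smul_eq_mul] using this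
        simp [hz]
      have h1 : (∑ α : P, g α * (if α = β then (r : ℚ) else lam)) = 0 := by
        calc ∑ α : P, g α * (if α = β then (r : ℚ) else lam)
            = ∑ α : P, g α * (∑ B : ↥𝓑, x α B * x β B) :=
              Finset.sum_congr rfl fun α _ => by rw [gram' α β]
          _ = ∑ α : P, ∑ B : ↥𝓑, g α * (x α B * x β B) :=
              Finset.sum_congr rfl fun α _ => by rw [Finset.mul_sum]
          _ = ∑ B : ↥𝓑, ∑ α : P, g α * (x α B * x β B) := Finset.sum_comm
          _ = ∑ B : ↥𝓑, (∑ α : P, g α * x α B) * x β B := by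
              refine Finset.sum_congr rfl fun B _ => ?_
              rw [Finset.sum_mul]
              exact Finset.sum_congr rfl fun α _ => by ring
          _ = 0 := h0
      have h2 : ∑ α : P, g α * (if α = β then (r : ℚ) else lam)
          = (lam : ℚ) * S + g β * ((r : ℚ) - lam) := by
        have hp : ∀ α : P, g α * (if α = β then (r : ℚ) else lam)
            = g α * lam + (if α = β then g α * ((r : ℚ) - lam) else 0) := by
          intro α; split_ifs with h <;> ring
        rw [Finset.sum_congr rfl fun α _ => hp α, Finset.sum_add_distrib,
          Finset.sum_ite_eq' Finset.univ β (fun α => g α * ((r : ℚ) - lam))]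
        simp only [Finset.mem_univ, if_true, ← Finset.sum_mul, ← hS_def]
        ring
      rw [h2] at h1
      exact h1
    have hsum : (v : ℚ) * ((lam : ℚ) * S) + S * ((r : ℚ) - lam) = 0 := by
      have h3 : ∑ β : P, ((lam : ℚ) * S + g β * ((r : ℚ) - lam)) = 0 := by
        rw [Finset.sum_congr rfl fun β _ => eq1 β]; simp
      rw [Finset.sum_add_distrib, Finset.sum_const, ← Finset.sum_mul, ← hS_def,
        Finset.card_univ, hv] at h3
      simpa [nsmul_eq_mul] using h3
    have hlamQ : (1 : ℚ) ≤ (lam : ℚ) := by exact_mod_cast hlam1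
    have hrQ : (lam : ℚ) < (r : ℚ) := by exact_mod_cast hrlam
    have hvQ : (1 : ℚ) ≤ (v : ℚ) := by exact_mod_cast hv1
    have h4 : S * ((v : ℚ) * lam + ((r : ℚ) - lam)) = 0 := by linear_combination hsum
    have hS0 : S = 0 := by
      rcases mul_eq_zero.mp h4 with h | h
      · exact h
      · nlinarith
    intro i
    have := eq1 i
    rw [hS0] at this
    have hne : (r : ℚ) - lam ≠ 0 := by linarith
    have : g i * ((r : ℚ) - lam) = 0 := by linarith
    exact (mul_eq_zero.mp this).resolve_right hne
  have hcard := hli.fintype_card_le_finrank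
  rw [Module.finrank_pi, Fintype.card_coe] at hcard
  omega
end
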